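/- Let Σ_0, Σ_1, ..., Σ_K be symmetric positive definite p×p real matrices, α_0, ..., α_K nonnegative reals summing to 1, and set Σ̄ = Σ_{k=0}^K α_k Σ_k. Suppose w^(0), ..., w^(K), β ∈ ℝ^p satisfy w^(0) = β and ‖w^(k) − β‖₁ ≤ η for all k, and suppose max_k ‖Σ̄⁻¹ Σ_k‖₁ ≤ C₁ where ‖·‖₁ is the maximum absolute column sum. If w* ∈ ℝ^p satisfies Σ_{k=0}^K α_k Σ_k (w^(k) − w*) = 0, then ‖w* − β‖₁ ≤ C₁ η. -/

import Mathlib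

open Finset Matrix

/-- ℓ¹ norm of a vector. -/
noncomputable def l1 {p : ℕ} (v : Fin p → ℝ) : ℝ := ∑ i, |v i|

/-- Induced operator 1-norm of a matrix: maximum absolute column sum. -/
noncomputable def matNorm1 {p : ℕ} (A : Matrix (Fin p) (Fin p) ℝ) : ℝ :=
  ⨆ j, ∑ i, |A i j|

/-! Subtracting `β` from `w*` in the normal equations gives
`Σ̄ (w* - β) = Σ_k α_k Σ_k (w^(k) - β)`, so `w* - β = Σ_k α_k (Σ̄⁻¹ Σ_k) (w^(k) - β)` is a convex
combination of vectors of ℓ¹ norm at most `‖Σ̄⁻¹ Σ_k‖₁ ‖w^(k) - β‖₁ ≤ C₁ η`. -/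

lemma Matrix.posDef_sum_smul {ι n R : Type*} [Fintype ι] [Fintype n] [CommRing R] [PartialOrder R]
    [IsStrictOrderedRing R] [StarRing R] [StarOrderedRing R] {A : ι → Matrix n n R} {α : ι → R}
    (hA : ∀ k, (A k).PosDef) (hα : ∀ k, 0 ≤ α k) (hpos : ∃ k, 0 < α k) :
    (∑ k, α k • A k).PosDef := by
  classical
  obtain ⟨k, hk⟩ := hpos
  rw [← add_sum_erase _ _ (mem_univ k)]
  exact ((hA k).smul hk).add_posSemidef
    (posSemidef_sum _ fun j _ => (hA j).posSemidef.smul (hα j))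

lemma sub_eq_sum_smul_inv_mul_mulVec {ι n R : Type*} [Fintype ι] [Fintype n] [DecidableEq n]
    [CommRing R] {A : ι → Matrix n n R} {α : ι → R} {w : ι → n → R} {x b : n → R}
    (hdet : IsUnit (∑ k, α k • A k).det) (hx : ∑ k, α k • A k *ᵥ (w k - x) = 0) :
    x - b = ∑ k, α k • ((∑ j, α j • A j)⁻¹ * A k) *ᵥ (w k - b) := by
  set S := ∑ j, α j • A j
  have hS : S *ᵥ (x - b) = ∑ k, α k • A k *ᵥ (w k - b) := by
    have hsplit : ∀ k, w k - b = (w k - x) + (x - b) := fun k => by abel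
    simp only [hsplit, mulVec_add, smul_add, sum_add_distrib, hx, zero_add, S, sum_mulVec,
      smul_mulVec]
  calc x - b = S⁻¹ *ᵥ (S *ᵥ (x - b)) := by rw [mulVec_mulVec, nonsing_inv_mul _ hdet, one_mulVec]
    _ = _ := by simp only [hS, mulVec_sum, mulVec_smul, mulVec_mulVec]

lemma l1_nonneg {p : ℕ} (v : Fin p → ℝ) : 0 ≤ l1 v :=
  sum_nonneg fun _ _ => abs_nonneg _

lemma matNorm1_nonneg {p : ℕ} (A : Matrix (Fin p) (Fin p) ℝ) : 0 ≤ matNorm1 A :=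
  Real.iSup_nonneg fun _ => sum_nonneg fun _ _ => abs_nonneg _

lemma sum_abs_le_matNorm1 {p : ℕ} (A : Matrix (Fin p) (Fin p) ℝ) (j : Fin p) :
    ∑ i, |A i j| ≤ matNorm1 A :=
  le_ciSup (f := fun j => ∑ i, |A i j|) (Set.finite_range _).bddAbove j

lemma l1_mulVec_le {p : ℕ} (A : Matrix (Fin p) (Fin p) ℝ) (v : Fin p → ℝ) :
    l1 (A *ᵥ v) ≤ matNorm1 A * l1 v := by
  unfold l1
  calc ∑ i, |(A *ᵥ v) i| ≤ ∑ i, ∑ j, |A i j| * |v j| :=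
        sum_le_sum fun i _ => by
          simpa only [mulVec, dotProduct, abs_mul] using abs_sum_le_sum_abs (fun j => A i j * v j) univ
    _ = ∑ j, (∑ i, |A i j|) * |v j| := by simp only [sum_mul]; exact sum_comm
    _ ≤ ∑ j, matNorm1 A * |v j| :=
        sum_le_sum fun j _ => mul_le_mul_of_nonneg_right (sum_abs_le_matNorm1 A j) (abs_nonneg _)
    _ = matNorm1 A * ∑ j, |v j| := (mul_sum _ _ _).symm

lemma l1_sum_le {ι : Type*} [Fintype ι] {p : ℕ} (v : ι → Fin p → ℝ) :
    l1 (∑ k, v k) ≤ ∑ k, l1 (v k) := by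
  unfold l1
  calc ∑ i, |(∑ k, v k) i| ≤ ∑ i, ∑ k, |v k i| :=
        sum_le_sum fun i _ => by
          simpa only [Finset.sum_apply] using abs_sum_le_sum_abs (fun k => v k i) univ
    _ = ∑ k, ∑ i, |v k i| := sum_comm

lemma l1_smul {p : ℕ} (c : ℝ) (v : Fin p → ℝ) : l1 (c • v) = |c| * l1 v := by
  simp only [l1, Pi.smul_apply, smul_eq_mul, abs_mul, mul_sum]

lemma l1_sum_smul_le {ι : Type*} [Fintype ι] {p : ℕ} {α : ι → ℝ} {v : ι → Fin p → ℝ} {c : ℝ}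
    (hα : ∀ k, 0 ≤ α k) (hαsum : ∑ k, α k = 1) (hv : ∀ k, l1 (v k) ≤ c) :
    l1 (∑ k, α k • v k) ≤ c :=
  calc l1 (∑ k, α k • v k) ≤ ∑ k, α k * c := (l1_sum_le _).trans <| sum_le_sum fun k _ => by
        rw [l1_smul, abs_of_nonneg (hα k)]; exact mul_le_mul_of_nonneg_left (hv k) (hα k)
    _ = c := by rw [← sum_mul, hαsum, one_mul]

theorem pooled_coefficient_l1_bound_general {p K : ℕ}
    (Sig : Fin (K + 1) → Matrix (Fin p) (Fin p) ℝ)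
    (hPD : ∀ k, (Sig k).PosDef)
    (α : Fin (K + 1) → ℝ) (hα : ∀ k, 0 ≤ α k) (hαsum : ∑ k, α k = 1)
    (w : Fin (K + 1) → Fin p → ℝ) (β wstar : Fin p → ℝ) (η C₁ : ℝ)
    (hsim : ∀ k, l1 (w k - β) ≤ η)
    (hC : ∀ k, matNorm1 ((∑ j, α j • Sig j)⁻¹ * Sig k) ≤ C₁)
    (hopt : ∑ k, α k • (Sig k).mulVec (w k - wstar) = 0) :
    l1 (wstar - β) ≤ C₁ * η := by
  have hpos : ∃ k, 0 < α k := by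
    obtain ⟨k, -, hk⟩ :=
      exists_lt_of_sum_lt (s := univ) (f := fun _ => (0 : ℝ)) (g := α) (by simp [hαsum])
    exact ⟨k, hk⟩
  have hdet : IsUnit (∑ j, α j • Sig j).det :=
    isUnit_iff_ne_zero.mpr (posDef_sum_smul hPD hα hpos).det_pos.ne'
  have hC₁ : 0 ≤ C₁ := (matNorm1_nonneg _).trans (hC 0)
  rw [sub_eq_sum_smul_inv_mul_mulVec hdet hopt]
  exact l1_sum_smul_le hα hαsum fun k =>
    (l1_mulVec_le _ _).trans (mul_le_mul (hC k) (hsim k) (l1_nonneg _) hC₁)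

/-- Lemma A.1: the pooled population coefficient `wstar` is ℓ¹-close to the target `β`. -/
theorem pooled_coefficient_l1_bound {p K : ℕ}
    (Sig : Fin (K + 1) → Matrix (Fin p) (Fin p) ℝ)
    (hSym : ∀ k, (Sig k).IsSymm) (hPD : ∀ k, (Sig k).PosDef)
    (α : Fin (K + 1) → ℝ) (hα : ∀ k, 0 ≤ α k) (hαsum : ∑ k, α k = 1)
    (w : Fin (K + 1) → Fin p → ℝ) (β wstar : Fin p → ℝ) (η C₁ : ℝ)
    (hw0 : w 0 = β)
    (hsim : ∀ k, l1 (w k - β) ≤ η)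
    (hC : ∀ k, matNorm1 ((∑ j, α j • Sig j)⁻¹ * Sig k) ≤ C₁)
    (hopt : ∑ k, α k • (Sig k).mulVec (w k - wstar) = 0) :
    l1 (wstar - β) ≤ C₁ * η :=
  pooled_coefficient_l1_bound_general Sig hPD α hα hαsum w β wstar η C₁ hsim hC hopt
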